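/- If X is a non-singular simplicial set, then the simplicial mapping set X^{Δ[1]} is non-singular. -/

import Mathlib

open CategoryTheory Simplicial Opposite MonoidalCategory Limits

/-- The representing map of a simplex is degreewise injective. -/
def SSet.RepInj (X : SSet.{0}) {n : ℕ} (x : X _⦋n⦌) : Prop :=
  ∀ m : SimplexCategoryᵒᵖ, Function.Injective (((@SSet.yonedaEquiv X ⦋n⦌).symm x).app m)

/-- The `i`-th vertex `x εᵢ` of a simplex. -/
def SSet.vert (X : SSet.{0}) {n : ℕ} (x : X _⦋n⦌) (i : Fin (n + 1)) : X _⦋0⦌ :=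
  X.map (SimplexCategory.const ⦋0⦌ ⦋n⦌ i).op x

/-- A simplex is degenerate if it is obtained from a simplex of strictly
lower degree by the action of an operator. -/
def SSet.IsDegenerate (X : SSet.{0}) {n : ℕ} (x : X _⦋n⦌) : Prop :=
  ∃ (m : ℕ) (_ : m < n) (α : (⦋n⦌ : SimplexCategory) ⟶ ⦋m⦌) (y : X _⦋m⦌),
    X.map α.op y = x

/-- A simplicial set is non-singular if every non-degenerate simplex has a
degreewise injective representing map. -/
def SSet.NonSingular (X : SSet.{0}) : Prop :=
  ∀ (n : ℕ) (x : X _⦋n⦌), ¬ X.IsDegenerate x → X.RepInj x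


/-- The simplicial mapping set `X^K`, whose `n`-simplices are the simplicial
maps `Δ[n] × K → X`. -/
noncomputable def SSet.sHom (K X : SSet.{0}) : SSet.{0} where
  obj m := SSet.stdSimplex.obj m.unop ⊗ K ⟶ X
  map α := TypeCat.ofHom fun f => (SSet.stdSimplex.map α.unop ▷ K) ≫ f
  map_id m := by
    ext f : 3
    simp
    erw [CategoryTheory.Functor.map_id]
    simp
  map_comp α β := by
    ext f : 3
    simp
    erw [CategoryTheory.Functor.map_comp]
    simp [MonoidalCategory.comp_whiskerRight]

/-!
Let `f : Δ[n] ⊗ Δ[1] ⟶ X` be an `n`-simplex of `X^{Δ[1]}` and suppose `g₁ ≠ g₂ : [m] ⟶ [n]` give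
the same face of `f`. At a vertex `t` with `g₁ t < g₂ t`, the columns `{g₁ t} × [1]` and
`{g₂ t} × [1]` of the prism then have the same vertices in `X`.

In a non-singular `X` every simplex is an operator `e` applied to a simplex with pairwise distinct
vertices. So the vertex map of a simplex is the monotone map `e` followed by an injection:
the columns `a` and `a + 1` in between also agree, and two faces of one simplex with the same
vertices coincide. Applied to the `n + 1` maximal simplices of the prism, this shows that `f` is
invariant under the collapse `[n] ⟶ [n]` of `a + 1` onto `a`, so `f` is degenerate.
-/

namespace SimplexCategory

lemma hom_ext_val {l n : ℕ} {φ ψ : ⦋l⦌ ⟶ ⦋n⦌}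
    (h : ∀ t, (φ.toOrderHom t : ℕ) = ψ.toOrderHom t) : φ = ψ :=
  Hom.ext _ _ (OrderHom.ext _ _ (funext fun t => Fin.ext (h t)))

lemma δ_apply_val {n : ℕ} (i : Fin (n + 2)) (t : Fin (n + 1)) :
    ((δ i).toOrderHom t : ℕ) = if (t : ℕ) < i then (t : ℕ) else t + 1 := by
  change (i.succAbove t : ℕ) = _
  simp only [Fin.succAbove, Fin.lt_def, Fin.val_castSucc]
  split_ifs <;> simp

lemma σ_apply_val {n : ℕ} (i : Fin (n + 1)) (t : Fin (n + 2)) :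
    ((σ i).toOrderHom t : ℕ) = if (i : ℕ) < t then (t : ℕ) - 1 else t := by
  change (i.predAbove t : ℕ) = _
  simp only [Fin.predAbove, Fin.lt_def, Fin.val_castSucc]
  split_ifs <;> simp

def collapse {n : ℕ} (a : Fin (n + 1)) : ⦋n + 1⦌ ⟶ ⦋n + 1⦌ := σ a ≫ δ a.succ

lemma collapse_apply_val {n : ℕ} (a : Fin (n + 1)) (t : Fin (n + 2)) :
    ((collapse a).toOrderHom t : ℕ) = if (t : ℕ) = a + 1 then (a : ℕ) else t := by
  simp only [collapse, comp_toOrderHom, OrderHom.comp_coe, Function.comp_apply, σ_apply_val,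
    δ_apply_val, Fin.val_succ]
  split_ifs <;> omega

/-- Together with `σ k`, this is the `k`-th nondegenerate `(n + 1)`-simplex
`(0,0) ≤ ⋯ ≤ (k,0) ≤ (k,1) ≤ ⋯ ≤ (n,1)` of `[n] × [1]`. -/
def prismSnd {n : ℕ} (k : Fin (n + 1)) : ⦋n + 1⦌ ⟶ ⦋1⦌ :=
  mkHom ⟨fun t => if (t : ℕ) ≤ k then 0 else 1, fun s t hst => by
    simp only [Fin.le_def] at hst ⊢
    split_ifs <;> simp_all; omega⟩

lemma prismSnd_apply_val {n : ℕ} (k : Fin (n + 1)) (t : Fin (n + 2)) :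
    ((prismSnd k).toOrderHom t : ℕ) = if (t : ℕ) ≤ k then 0 else 1 := by
  change ((if (t : ℕ) ≤ k then 0 else 1 : Fin 2) : ℕ) = _
  split_ifs <;> rfl

/-- The simplex `(u, v)` of `[n] × [1]` only meets vertices of the `k`-th simplex
`(0,0) ≤ ⋯ ≤ (k,0) ≤ (k,1) ≤ ⋯ ≤ (n,1)`. -/
def InPrismSimplex {l n : ℕ} (k : Fin (n + 1)) (u : ⦋l⦌ ⟶ ⦋n⦌) (v : ⦋l⦌ ⟶ ⦋1⦌) : Prop :=
  ∀ t, ((v.toOrderHom t : ℕ) = 0 ∧ (u.toOrderHom t : ℕ) ≤ k) ∨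
    ((v.toOrderHom t : ℕ) = 1 ∧ (k : ℕ) ≤ u.toOrderHom t)

lemma exists_inPrismSimplex {l n : ℕ} (u : ⦋l⦌ ⟶ ⦋n⦌) (v : ⦋l⦌ ⟶ ⦋1⦌) :
    ∃ k, InPrismSimplex k u v := by
  classical
  let k := ((Finset.univ.filter fun t => (v.toOrderHom t : ℕ) = 0).sup u.toOrderHom)
  refine ⟨k, fun t => ?_⟩
  have hv := (v.toOrderHom t).isLt
  simp only [len_mk] at hv
  by_cases hvt : (v.toOrderHom t : ℕ) = 0
  · exact Or.inl ⟨hvt, Finset.le_sup (f := u.toOrderHom) (by simpa using hvt)⟩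
  · refine Or.inr ⟨by omega, Finset.sup_le fun s hs => u.toOrderHom.monotone ?_⟩
    by_contra! hts
    have := v.toOrderHom.monotone hts.le
    simp only [Finset.mem_filter, Finset.mem_univ, true_and] at hs
    simp only [Fin.le_def] at this
    omega

lemma exists_comp_eq_of_inPrismSimplex {l n : ℕ} {k : Fin (n + 1)} {u : ⦋l⦌ ⟶ ⦋n⦌}
    {v : ⦋l⦌ ⟶ ⦋1⦌} (h : InPrismSimplex k u v) :
    ∃ θ : ⦋l⦌ ⟶ ⦋n + 1⦌, θ ≫ σ k = u ∧ θ ≫ prismSnd k = v := by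
  let θ : ⦋l⦌ ⟶ ⦋n + 1⦌ := mkHom ⟨fun t => ⟨u.toOrderHom t + v.toOrderHom t, by
      have := (u.toOrderHom t).isLt; have := (v.toOrderHom t).isLt
      simp only [len_mk] at *; omega⟩, fun s t hst => by
      have := u.toOrderHom.monotone hst; have := v.toOrderHom.monotone hst
      simp only [Fin.le_def] at *; omega⟩
  have hθ : ∀ t, (θ.toOrderHom t : ℕ) = u.toOrderHom t + v.toOrderHom t := fun _ => rfl
  refine ⟨θ, hom_ext_val fun t => ?_, hom_ext_val fun t => ?_⟩
  · rw [comp_toOrderHom, OrderHom.comp_coe, Function.comp_apply, σ_apply_val, hθ]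
    rcases h t with h | h <;> split_ifs <;> omega
  · rw [comp_toOrderHom, OrderHom.comp_coe, Function.comp_apply, prismSnd_apply_val, hθ]
    rcases h t with h | h <;> split_ifs <;> omega

end SimplexCategory

namespace SSet

open SimplexCategory

variable {X : SSet.{0}}

lemma repInj_iff_mono {n : ℕ} (x : X _⦋n⦌) : X.RepInj x ↔ Mono (yonedaEquiv.symm x) := by
  simp only [NatTrans.mono_iff_mono_app, CategoryTheory.mono_iff_injective]
  rfl

lemma nonSingular_iff_nonsingular : X.NonSingular ↔ X.Nonsingular :=
  ⟨fun h => ⟨fun x => (repInj_iff_mono _).mp (h _ _ x.2)⟩,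
    fun _ _ x hx => (repInj_iff_mono x).mpr (Nonsingular.mono' x hx)⟩

lemma vert_map {n m : ℕ} (e : ⦋n⦌ ⟶ ⦋m⦌) (y : X _⦋m⦌) (t : Fin (n + 1)) :
    X.vert (X.map e.op y) t = X.vert y (e.toOrderHom t) := by
  rw [vert, vert, ← Functor.map_comp_apply, ← op_comp, SimplexCategory.const_comp]

def prodApp {p q : ℕ} (f : Δ[p] ⊗ Δ[q] ⟶ X) {l : ℕ} (u : ⦋l⦌ ⟶ ⦋p⦌) (v : ⦋l⦌ ⟶ ⦋q⦌) :
    X _⦋l⦌ :=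
  f.app (op ⦋l⦌) (stdSimplex.objEquiv.symm u, stdSimplex.objEquiv.symm v)

def prodVert {p q : ℕ} (f : Δ[p] ⊗ Δ[q] ⟶ X) (i : Fin (p + 1)) (j : Fin (q + 1)) : X _⦋0⦌ :=
  prodApp f (SimplexCategory.const ⦋0⦌ ⦋p⦌ i) (SimplexCategory.const ⦋0⦌ ⦋q⦌ j)

lemma prodStdSimplex_hom_ext {p q : ℕ} {f g : Δ[p] ⊗ Δ[q] ⟶ X}
    (h : ∀ (l : ℕ) (u : ⦋l⦌ ⟶ ⦋p⦌) (v : ⦋l⦌ ⟶ ⦋q⦌), prodApp f u v = prodApp g u v) : f = g := by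
  ext ⟨m⟩ ⟨x, y⟩
  have := h m.len (stdSimplex.objEquiv x) (stdSimplex.objEquiv y)
  simp only [prodApp, Equiv.symm_apply_apply] at this
  exact this

lemma prodApp_comp {p q l m : ℕ} (f : Δ[p] ⊗ Δ[q] ⟶ X) (θ : ⦋m⦌ ⟶ ⦋l⦌) (u : ⦋l⦌ ⟶ ⦋p⦌)
    (v : ⦋l⦌ ⟶ ⦋q⦌) : prodApp f (θ ≫ u) (θ ≫ v) = X.map θ.op (prodApp f u v) :=
  NatTrans.naturality_apply (D := Type) f θ.op
    ((stdSimplex.objEquiv.symm u, stdSimplex.objEquiv.symm v) : (Δ[p] ⊗ Δ[q] : SSet) _⦋l⦌)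

lemma vert_prodApp {p q l : ℕ} (f : Δ[p] ⊗ Δ[q] ⟶ X) (u : ⦋l⦌ ⟶ ⦋p⦌) (v : ⦋l⦌ ⟶ ⦋q⦌)
    (t : Fin (l + 1)) :
    X.vert (prodApp f u v) t = prodVert f (u.toOrderHom t) (v.toOrderHom t) := by
  rw [vert, prodVert, ← SimplexCategory.const_comp ⦋0⦌ u, ← SimplexCategory.const_comp ⦋0⦌ v,
    prodApp_comp]

lemma prodVert_eq_of_collapse_eq {n : ℕ} (f : Δ[n + 1] ⊗ Δ[1] ⟶ X) {a : Fin (n + 1)}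
    (ha : ∀ ε, prodVert f a.castSucc ε = prodVert f a.succ ε) {i j : Fin (n + 2)}
    (hij : ((collapse a).toOrderHom i : ℕ) = (collapse a).toOrderHom j) (ε : Fin 2) :
    prodVert f i ε = prodVert f j ε := by
  have hcollapse : ∀ i, prodVert f ((collapse a).toOrderHom i) ε = prodVert f i ε := by
    intro i
    by_cases hi : (i : ℕ) = a + 1
    · obtain rfl : i = a.succ := Fin.ext (by simpa using hi)
      rw [show (collapse a).toOrderHom a.succ = a.castSucc from Fin.ext (by
        simp [collapse_apply_val]), ha]
    · rw [show (collapse a).toOrderHom i = i from Fin.ext (by simp [collapse_apply_val, hi])]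
  rw [← hcollapse i, ← hcollapse j, Fin.ext hij]

variable [X.Nonsingular]

lemma vert_injective {n : ℕ} {x : X _⦋n⦌} (hx : x ∈ X.nonDegenerate n) :
    Function.Injective (X.vert x) := fun i j h => by
  simpa using congr_arg (fun g => g.toOrderHom 0) (Nonsingular.injective_map x hx h)

lemma exists_map_eq_vert_injective {n : ℕ} (x : X _⦋n⦌) :
    ∃ (m : ℕ) (e : ⦋n⦌ ⟶ ⦋m⦌) (y : X _⦋m⦌),
      Function.Injective (X.vert y) ∧ X.map e.op y = x := by
  obtain ⟨m, e, -, y, rfl⟩ := X.exists_nonDegenerate x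
  exact ⟨m, e, y, vert_injective y.2, rfl⟩

lemma map_eq_map_of_vert_eq {n l : ℕ} (x : X _⦋n⦌) {φ ψ : ⦋l⦌ ⟶ ⦋n⦌}
    (h : ∀ t, X.vert x (φ.toOrderHom t) = X.vert x (ψ.toOrderHom t)) :
    X.map φ.op x = X.map ψ.op x := by
  obtain ⟨m, e, y, hy, rfl⟩ := exists_map_eq_vert_injective x
  have : φ ≫ e = ψ ≫ e :=
    SimplexCategory.Hom.ext _ _ (OrderHom.ext _ _ (funext fun t => hy <|
      (vert_map e y _).symm.trans ((h t).trans (vert_map e y _))))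
  simp only [← Functor.map_comp_apply, ← op_comp, this]

lemma vert_eq_of_le_of_le {n : ℕ} (x : X _⦋n⦌) {i j k : Fin (n + 1)}
    (h : X.vert x i = X.vert x k) (hij : i ≤ j) (hjk : j ≤ k) : X.vert x i = X.vert x j := by
  obtain ⟨m, e, y, hy, rfl⟩ := exists_map_eq_vert_injective x
  simp only [vert_map, hy.eq_iff] at h ⊢
  exact le_antisymm (e.toOrderHom.monotone hij) (h ▸ e.toOrderHom.monotone hjk)

lemma prodApp_eq_of_prodVert_eq {p q l m : ℕ} (f : Δ[p] ⊗ Δ[q] ⟶ X) {w : ⦋m⦌ ⟶ ⦋p⦌}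
    {z : ⦋m⦌ ⟶ ⦋q⦌} {θ θ' : ⦋l⦌ ⟶ ⦋m⦌}
    (h : ∀ t, prodVert f ((θ ≫ w).toOrderHom t) ((θ ≫ z).toOrderHom t) =
      prodVert f ((θ' ≫ w).toOrderHom t) ((θ' ≫ z).toOrderHom t)) :
    prodApp f (θ ≫ w) (θ ≫ z) = prodApp f (θ' ≫ w) (θ' ≫ z) := by
  rw [prodApp_comp, prodApp_comp]
  refine map_eq_map_of_vert_eq _ fun t => ?_
  rw [vert_prodApp, vert_prodApp]
  exact h t

lemma prodApp_eq_of_inPrismSimplex {n l : ℕ} (f : Δ[n] ⊗ Δ[1] ⟶ X) {k : Fin (n + 1)}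
    {u u' : ⦋l⦌ ⟶ ⦋n⦌} {v v' : ⦋l⦌ ⟶ ⦋1⦌} (hk : InPrismSimplex k u v)
    (hk' : InPrismSimplex k u' v')
    (h : ∀ t, prodVert f (u.toOrderHom t) (v.toOrderHom t) =
      prodVert f (u'.toOrderHom t) (v'.toOrderHom t)) :
    prodApp f u v = prodApp f u' v' := by
  obtain ⟨θ, rfl, rfl⟩ := exists_comp_eq_of_inPrismSimplex hk
  obtain ⟨θ', rfl, rfl⟩ := exists_comp_eq_of_inPrismSimplex hk'
  exact prodApp_eq_of_prodVert_eq f h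

lemma prodApp_σ_succ_comp_collapse {n : ℕ} (f : Δ[n + 1] ⊗ Δ[1] ⟶ X) (a : Fin (n + 1))
    (ha : ∀ ε, prodVert f a.castSucc ε = prodVert f a.succ ε) :
    prodApp f (σ a.succ ≫ collapse a) (prismSnd a.succ) =
      prodApp f (σ a.succ) (prismSnd a.succ) := by
  -- The collapse moves this maximal simplex of the prism out of itself, into the
  -- `a.castSucc`-th one; go through a simplex lying in both.
  refine (prodApp_eq_of_inPrismSimplex f (k := a.castSucc)
    (u' := collapse a.castSucc ≫ σ a.succ) (v' := prismSnd a.succ) (fun s => ?_) (fun s => ?_)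
    fun s => prodVert_eq_of_collapse_eq f ha ?_ _).trans
    (prodApp_eq_of_inPrismSimplex f (k := a.succ) (fun s => ?_) (fun s => ?_)
      fun s => prodVert_eq_of_collapse_eq f ha ?_ _)
  all_goals
    simp only [comp_toOrderHom, OrderHom.comp_coe, Function.comp_apply, σ_apply_val,
      collapse_apply_val, prismSnd_apply_val, Fin.val_succ, Fin.val_castSucc]
    split_ifs <;> omega

lemma prodApp_comp_collapse {n l : ℕ} (f : Δ[n + 1] ⊗ Δ[1] ⟶ X) (a : Fin (n + 1))
    (ha : ∀ ε, prodVert f a.castSucc ε = prodVert f a.succ ε) (u : ⦋l⦌ ⟶ ⦋n + 1⦌)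
    (v : ⦋l⦌ ⟶ ⦋1⦌) : prodApp f (u ≫ collapse a) v = prodApp f u v := by
  obtain ⟨k, hk⟩ := exists_inPrismSimplex u v
  by_cases hka : (k : ℕ) = a + 1
  · obtain rfl : k = a.succ := Fin.ext (by simpa using hka)
    obtain ⟨θ, rfl, rfl⟩ := exists_comp_eq_of_inPrismSimplex hk
    rw [Category.assoc, prodApp_comp, prodApp_comp, prodApp_σ_succ_comp_collapse f a ha]
  · refine prodApp_eq_of_inPrismSimplex f (fun t => ?_) hk
      fun t => prodVert_eq_of_collapse_eq f ha ?_ _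
    · have := hk t
      simp only [comp_toOrderHom, OrderHom.comp_coe, Function.comp_apply,
        collapse_apply_val] at this ⊢
      split_ifs <;> omega
    · simp only [comp_toOrderHom, OrderHom.comp_coe, Function.comp_apply, collapse_apply_val]
      split_ifs <;> omega

lemma sHom_isDegenerate_of_prodVert_eq {n : ℕ} (f : (sHom Δ[1] X) _⦋n⦌) {i j : Fin (n + 1)}
    (hij : i < j) (h : ∀ ε, prodVert (p := n) f i ε = prodVert f j ε) :
    (sHom Δ[1] X).IsDegenerate f := by
  have hij' : (i : ℕ) < j := hij
  obtain ⟨n, rfl⟩ : ∃ m, n = m + 1 := ⟨n - 1, by omega⟩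
  let a : Fin (n + 1) := ⟨i, by omega⟩
  have hadj : ∀ ε, prodVert f a.castSucc ε = prodVert f a.succ ε := by
    intro ε
    let x := prodApp f (𝟙 _) (SimplexCategory.const ⦋n + 1⦌ ⦋1⦌ ε)
    have hx : ∀ t, X.vert x t = prodVert f t ε := fun t => vert_prodApp f _ _ t
    have := vert_eq_of_le_of_le x (j := a.succ) ((hx i).trans ((h ε).trans (hx j).symm))
      (by simp [Fin.le_def, a]) (by simp [Fin.le_def, a]; omega)
    exact (hx _).symm.trans (this.trans (hx _))
  have hf : (sHom Δ[1] X).map (collapse a).op f = f :=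
    prodStdSimplex_hom_ext fun _ u v => prodApp_comp_collapse f a hadj u v
  refine ⟨n, by omega, σ a, (sHom Δ[1] X).map (δ a.succ).op f, ?_⟩
  rw [← Functor.map_comp_apply, ← op_comp]
  exact hf

lemma sHom_map_injective {n l : ℕ} {f : (sHom Δ[1] X) _⦋n⦌}
    (hf : ¬ (sHom Δ[1] X).IsDegenerate f) :
    Function.Injective fun g : ⦋l⦌ ⟶ ⦋n⦌ => (sHom Δ[1] X).map g.op f := by
  intro g₁ g₂ hg
  by_contra hne
  obtain ⟨t, ht⟩ : ∃ t, g₁.toOrderHom t ≠ g₂.toOrderHom t := by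
    by_contra! h
    exact hne (Hom.ext _ _ (OrderHom.ext _ _ (funext h)))
  have hcol : ∀ ε, prodVert (p := n) f (g₁.toOrderHom t) ε = prodVert f (g₂.toOrderHom t) ε :=
    fun ε => congr_arg (prodApp · (SimplexCategory.const ⦋0⦌ ⦋l⦌ t)
      (SimplexCategory.const ⦋0⦌ ⦋1⦌ ε)) hg
  rcases ht.lt_or_gt with h | h
  · exact hf (sHom_isDegenerate_of_prodVert_eq f h hcol)
  · exact hf (sHom_isDegenerate_of_prodVert_eq f h fun ε => (hcol ε).symm)

end SSet

/-- If `X` is a non-singular simplicial set, then the simplicial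
mapping set `X^{Δ[1]}` is non-singular. -/
theorem nonSingular_sHom_deltaOne (X : SSet.{0}) (hX : X.NonSingular) :
    (SSet.sHom Δ[1] X).NonSingular := by
  have := SSet.nonSingular_iff_nonsingular.mp hX
  intro n f hf ⟨m⟩ g₁ g₂ hg
  exact SSet.stdSimplex.objEquiv.injective (SSet.sHom_map_injective (l := m.len) hf hg)
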